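/- For an R-module N and nonnegative integer m, the L_n-injective dimension of N is at most m if and only if Ext^{m+1}_R(M,N)=0 for every R-module M of flat dimension at most n. -/

import Mathlib

/-!
Induction on `m`; for `m = 0` both sides say that `N` is `L_n`-injective. The inductive step
compares `N` with `C` in a short exact sequence `0 → N → W → C → 0` through the long exact
sequence of `Ext(M, -)`, computed on the Hom complexes of a projective resolution of `M`.

(⇒) As `W` is `L_n`-injective, it remains to see `Ext^{k+1}(M, W) = 0` for all `k` when
`fd M ≤ n`. This is dimension shifting along `0 → K → R^(M) → M → 0`: prolonging a projective
resolution of `K` by `R^(M)` resolves `M`, so `Ext^{k+2}(M, W) ≅ Ext^{k+1}(K, W)`, and `K` again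
has flat dimension at most `n` by a Schanuel-type comparison with a flat presentation of `M`.

(⇐) Take `W` injective: it is `L_n`-injective and `Ext^{≥1}(M, W) = 0`, so
`Ext^{m+1}(M, C) ≅ Ext^{m+2}(M, N) = 0`.
-/

open CategoryTheory

/-- Flatness of a module over an arbitrary (possibly noncommutative) ring,
via the equational criterion: every relation is a consequence of trivial relations. -/
def IsFlatMod (R : Type) [Ring R] (M : Type) [AddCommGroup M] [Module R M] : Prop :=
  ∀ (ι : Type) (_ : Fintype ι) (r : ι → R) (x : ι → M),
    (∑ i, r i • x i = 0) →
      ∃ (κ : Type) (_ : Fintype κ) (a : ι → κ → R) (y : κ → M),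
        (∀ i, x i = ∑ j, a i j • y j) ∧ ∀ j, (∑ i, r i * a i j) = 0

variable (R : Type) [Ring R]

/-- `Ext^n_R(M, N) = 0`. -/
def extVanish (n : ℕ) (M N : ModuleCat.{0} R) : Prop :=
  Subsingleton (((Ext ℤ (ModuleCat.{0} R) n).obj (Opposite.op M)).obj N)

/-- `M` has flat dimension at most `n`. -/
def fdLE : ℕ → ModuleCat.{0} R → Prop
  | 0, M => IsFlatMod R M
  | n+1, M => ∃ (K F : ModuleCat.{0} R) (f : K ⟶ F) (g : F ⟶ M),
      IsFlatMod R F ∧ Function.Injective f ∧ Function.Surjective g ∧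
        Function.Exact f g ∧ fdLE n K

/-- `W` is `L_n`-injective: `Ext^1_R(M, W) = 0` for every `M` of flat dimension at most `n`. -/
def LnInj (n : ℕ) (W : ModuleCat.{0} R) : Prop :=
  ∀ M : ModuleCat.{0} R, fdLE R n M → extVanish R 1 M W

/-- `N` has `L_n`-injective dimension at most `m`: there is an exact sequence
`0 → N → W_0 → ⋯ → W_m → 0` with all `W_i` `L_n`-injective. -/
def LnidLE (n : ℕ) : ℕ → ModuleCat.{0} R → Prop
  | 0, N => LnInj R n N
  | m+1, N => ∃ (W C : ModuleCat.{0} R) (f : N ⟶ W) (g : W ⟶ C),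
      LnInj R n W ∧ Function.Injective f ∧ Function.Surjective g ∧
        Function.Exact f g ∧ LnidLE n m C

/-- The `L_n`-injective dimension of `N`, as an extended natural number. -/
noncomputable def Lnid (n : ℕ) (N : ModuleCat.{0} R) : ℕ∞ :=
  sInf {k : ℕ∞ | ∃ m : ℕ, k = m ∧ LnidLE R n m N}


open Limits

universe u v

section HomologicalAlgebra

variable {C : Type u} [Category.{v} C] [Abelian C]

def ChainComplex.linearYonedaObjMap (K : ChainComplex C ℕ) {Y Y' : C} (φ : Y ⟶ Y') :
    K.linearYonedaObj ℤ Y ⟶ K.linearYonedaObj ℤ Y' where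
  f i := ModuleCat.ofHom (Linear.rightComp ℤ (K.X i) φ)
  comm' i j _ := by
    ext (u : K.X i ⟶ Y)
    exact (Category.assoc _ _ _).symm

def ChainComplex.linearYonedaObjShortComplex (K : ChainComplex C ℕ) (S : ShortComplex C) :
    ShortComplex (CochainComplex (ModuleCat ℤ) ℕ) :=
  ShortComplex.mk (K.linearYonedaObjMap S.f) (K.linearYonedaObjMap S.g) (by
    ext i (u : K.X i ⟶ S.X₁)
    exact (Category.assoc _ _ _).trans (by rw [S.zero, comp_zero]; rfl))

lemma ChainComplex.shortExact_linearYonedaObjShortComplex (K : ChainComplex C ℕ)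
    [∀ n, Projective (K.X n)] {S : ShortComplex C} (hS : S.ShortExact) :
    (K.linearYonedaObjShortComplex S).ShortExact := by
  have := hS.mono_f
  have := hS.epi_g
  refine HomologicalComplex.shortExact_of_degreewise_shortExact _ fun i => ?_
  refine ModuleCat.shortComplex_shortExact _ (fun (v : K.X i ⟶ S.X₂) => ⟨fun hv => ?_, ?_⟩)
    (fun u₁ u₂ h => (cancel_mono S.f).1 h)
    (fun w => ⟨Projective.factorThru w S.g, Projective.factorThru_comp w S.g⟩)
  · exact ⟨hS.exact.liftFromProjective v hv, hS.exact.liftFromProjective_comp v hv⟩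
  · rintro ⟨(u : K.X i ⟶ S.X₁), rfl⟩
    exact (Category.assoc u S.f S.g).trans (by rw [S.zero, comp_zero]; rfl)

lemma ChainComplex.quasiIsoAt_toSingle₀Equiv_symm_zero {K : ChainComplex C ℕ} {X : C}
    (g : K.X 0 ⟶ X) (hg : K.d 1 0 ≫ g = 0) (hK : (ShortComplex.mk _ _ hg).Exact) [Epi g] :
    QuasiIsoAt ((K.toSingle₀Equiv X).symm ⟨g, hg⟩) 0 := by
  rw [ChainComplex.quasiIsoAt₀_iff, ShortComplex.quasiIso_iff_of_zeros']
  · simp only [HomologicalComplex.shortComplexFunctor'_map_τ₂,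
      ChainComplex.toSingle₀Equiv_symm_apply_f_zero]
    exact ⟨hK, ‹Epi g›⟩
  · simp; rfl
  all_goals rfl

namespace CategoryTheory.ProjectiveResolution

section Augmentation

variable {Z : C} (Q : ProjectiveResolution Z)

noncomputable def augmentation : Q.complex.X 0 ⟶ Z :=
  (ChainComplex.toSingle₀Equiv _ _ Q.π).1

lemma d_comp_augmentation : Q.complex.d 1 0 ≫ Q.augmentation = 0 :=
  (ChainComplex.toSingle₀Equiv _ _ Q.π).2

instance : Epi Q.augmentation := inferInstanceAs (Epi (Q.π.f 0))

lemma exact_augmentation : (ShortComplex.mk _ _ Q.d_comp_augmentation).Exact :=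
  Q.exact₀

end Augmentation

noncomputable def ofShortExact {S : ShortComplex C} (hS : S.ShortExact) [Projective S.X₂]
    (Q : ProjectiveResolution S.X₁) : ProjectiveResolution S.X₃ where
  complex := Q.complex.augment (Q.augmentation ≫ S.f)
    (by rw [← Category.assoc, Q.d_comp_augmentation, zero_comp])
  projective
    | 0 => ‹_›
    | n + 1 => Q.projective n
  π := (ChainComplex.toSingle₀Equiv _ _).symm ⟨S.g, by simp; rfl⟩
  quasiIso := ⟨fun n => by
    cases n with
    | zero =>
      let α : ShortComplex.mk (Q.augmentation ≫ S.f) S.g (by simp) ⟶ S :=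
        { τ₁ := Q.augmentation, τ₂ := 𝟙 _, τ₃ := 𝟙 _ }
      -- `Epi S.g` is passed by hand: its source is `(augment ..).X 0` only up to unfolding.
      exact @ChainComplex.quasiIsoAt_toSingle₀Equiv_symm_zero _ _ _ _ _ _ _
        ((ShortComplex.exact_iff_of_epi_of_isIso_of_mono α).2 hS.exact) hS.epi_g
    | succ n =>
      rw [quasiIsoAt_iff_exactAt' _ _ (ChainComplex.exactAt_succ_single_obj _ _),
        HomologicalComplex.exactAt_iff' _ (n + 2) (n + 1) n (by simp) (by simp)]
      cases n with
      | zero =>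
        have := hS.mono_f
        let β : ShortComplex.mk _ _ Q.d_comp_augmentation ⟶
            ShortComplex.mk (Q.complex.d 1 0) (Q.augmentation ≫ S.f)
              (by rw [← Category.assoc, Q.d_comp_augmentation, zero_comp]) :=
          { τ₁ := 𝟙 _, τ₂ := 𝟙 _, τ₃ := S.f }
        exact (ShortComplex.exact_iff_of_epi_of_isIso_of_mono β).1 Q.exact_augmentation
      | succ n => exact Q.exact_succ n⟩

end CategoryTheory.ProjectiveResolution

variable [EnoughProjectives C]

lemma isZero_Ext_succ_of_injective (X Y : C) [Injective Y] (n : ℕ) :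
    IsZero (((Ext ℤ C (n + 1)).obj (Opposite.op X)).obj Y) := by
  let P := ProjectiveResolution.of X
  refine IsZero.of_iso ?_ (P.isoExt (n + 1) Y)
  rw [← HomologicalComplex.exactAt_iff_isZero_homology,
    HomologicalComplex.exactAt_iff' _ n (n + 1) (n + 2) (by simp) (by simp),
    ShortComplex.moduleCat_exact_iff]
  intro (φ : P.complex.X (n + 1) ⟶ Y) hφ
  exact ⟨(P.exact_succ n).descToInjective φ hφ, (P.exact_succ n).comp_descToInjective φ hφ⟩

namespace CategoryTheory.ShortComplex.ShortExact

variable {S : ShortComplex C} (hS : S.ShortExact)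
include hS

lemma isZero_Ext_X₁ (X : C) (n : ℕ)
    (h₃ : IsZero (((Ext ℤ C n).obj (Opposite.op X)).obj S.X₃))
    (h₂ : IsZero (((Ext ℤ C (n + 1)).obj (Opposite.op X)).obj S.X₂)) :
    IsZero (((Ext ℤ C (n + 1)).obj (Opposite.op X)).obj S.X₁) := by
  let P := ProjectiveResolution.of X
  have hT := P.complex.shortExact_linearYonedaObjShortComplex hS
  refine IsZero.of_iso ?_ (P.isoExt (n + 1) S.X₁)
  exact (hT.homology_exact₁ n (n + 1) (by simp)).isZero_X₂
    ((h₃.of_iso (P.isoExt n _).symm).eq_of_src _ _)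
    ((h₂.of_iso (P.isoExt (n + 1) _).symm).eq_of_tgt _ _)

lemma isZero_Ext_X₃ (X : C) (n : ℕ)
    (h₂ : IsZero (((Ext ℤ C n).obj (Opposite.op X)).obj S.X₂))
    (h₁ : IsZero (((Ext ℤ C (n + 1)).obj (Opposite.op X)).obj S.X₁)) :
    IsZero (((Ext ℤ C n).obj (Opposite.op X)).obj S.X₃) := by
  let P := ProjectiveResolution.of X
  have hT := P.complex.shortExact_linearYonedaObjShortComplex hS
  refine IsZero.of_iso ?_ (P.isoExt n S.X₃)
  exact (hT.homology_exact₃ n (n + 1) (by simp)).isZero_X₂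
    ((h₂.of_iso (P.isoExt n _).symm).eq_of_src _ _)
    ((h₁.of_iso (P.isoExt (n + 1) _).symm).eq_of_tgt _ _)

/-- The Hom complex of `ofShortExact hS Q` is that of `Q` shifted by one, so the two middle
homology objects agree definitionally. -/
noncomputable def extSuccSuccIso [Projective S.X₂] (Y : C) (n : ℕ) :
    ((Ext ℤ C (n + 2)).obj (Opposite.op S.X₃)).obj Y ≅
      ((Ext ℤ C (n + 1)).obj (Opposite.op S.X₁)).obj Y :=
  let Q := ProjectiveResolution.of S.X₁
  (ProjectiveResolution.ofShortExact hS Q).isoExt (n + 2) Y ≪≫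
    HomologicalComplex.homologyIsoSc' _ (n + 1) (n + 2) (n + 3) (by simp) (by simp) ≪≫
    (HomologicalComplex.homologyIsoSc' (Q.complex.linearYonedaObj ℤ Y) n (n + 1) (n + 2)
      (by simp) (by simp)).symm ≪≫
    (Q.isoExt (n + 1) Y).symm

end CategoryTheory.ShortComplex.ShortExact

end HomologicalAlgebra

lemma sum_smul_sum_smul {A M κ ν : Type*} [Semiring A] [AddCommMonoid M] [Module A M]
    [Fintype κ] [Fintype ν] (a : κ → A) (b : κ → ν → A) (z : ν → M) :
    ∑ j, a j • ∑ l, b j l • z l = ∑ l, (∑ j, a j * b j l) • z l := by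
  simp only [Finset.smul_sum, Finset.sum_smul, mul_smul]
  exact Finset.sum_comm

namespace IsFlatMod

variable {R} {M N : Type} [AddCommGroup M] [Module R M] [AddCommGroup N] [Module R N]

lemma of_subsingleton [Subsingleton M] : IsFlatMod R M := fun _ _ _ x _ =>
  ⟨PEmpty, inferInstance, fun _ j => j.elim, fun j => j.elim,
    fun i => by simp [Subsingleton.elim (x i) 0], fun j => j.elim⟩

lemma of_linearEquiv (e : M ≃ₗ[R] N) (hM : IsFlatMod R M) : IsFlatMod R N := by
  intro ι _ r x hx
  obtain ⟨κ, _, a, y, hxy, ha⟩ := hM ι ‹_› r (fun i => e.symm (x i)) (by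
    simpa only [map_smul, map_sum, map_zero] using congrArg e.symm hx)
  exact ⟨κ, ‹_›, a, fun j => e (y j), fun i => by
    simpa only [map_smul, map_sum, LinearEquiv.apply_symm_apply] using congrArg e (hxy i), ha⟩

lemma finsupp (σ : Type) : IsFlatMod R (σ →₀ R) := by
  classical
  intro ι _ r x hx
  let S := Finset.univ.biUnion fun i => (x i).support
  refine ⟨S, inferInstance, fun i s => x i s, fun s => Finsupp.single s 1, fun i => ?_,
    fun s => ?_⟩
  · have hS : (x i).support ⊆ S :=
      Finset.subset_biUnion_of_mem (fun i => (x i).support) (Finset.mem_univ i)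
    rw [Finset.sum_coe_sort S (fun s => x i s • Finsupp.single s (1 : R))]
    simp only [Finsupp.smul_single_one]
    rw [← Finsupp.sum_of_support_subset (x i) hS Finsupp.single fun _ _ => Finsupp.single_zero _,
      Finsupp.sum_single]
  · simpa [Finsupp.finsetSum_apply] using congrArg (· (s : σ)) hx

lemma prod (hM : IsFlatMod R M) (hN : IsFlatMod R N) : IsFlatMod R (M × N) := by
  intro ι _ r x hx
  obtain ⟨κ, _, a, y, hxy, ha⟩ := hM ι ‹_› r (fun i => (x i).1) (by
    simpa [Prod.fst_sum] using congrArg Prod.fst hx)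
  obtain ⟨ν, _, b, z, hxz, hb⟩ := hN ι ‹_› r (fun i => (x i).2) (by
    simpa [Prod.snd_sum] using congrArg Prod.snd hx)
  refine ⟨κ ⊕ ν, inferInstance, fun i => Sum.elim (a i) (b i),
    Sum.elim (fun j => (y j, 0)) (fun l => (0, z l)), fun i => ?_, Sum.rec ha hb⟩
  ext
  · simpa [Fintype.sum_sum_type, Prod.fst_sum] using hxy i
  · simpa [Fintype.sum_sum_type, Prod.snd_sum] using hxz i

lemma exists_factorization_of_relations (hM : IsFlatMod R M) (t : ℕ) {ι : Type} [Fintype ι]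
    (c : Fin t → ι → R) (x : ι → M) (hx : ∀ s, ∑ i, c s i • x i = 0) :
    ∃ (κ : Type) (_ : Fintype κ) (a : ι → κ → R) (y : κ → M),
      (∀ i, x i = ∑ j, a i j • y j) ∧ ∀ s j, ∑ i, c s i * a i j = 0 := by
  induction t generalizing ι with
  | zero =>
    classical
    exact ⟨ι, ‹_›, fun i j => if i = j then 1 else 0, x, fun i => by simp [ite_smul],
      fun s => s.elim0⟩
  | succ t ih =>
    obtain ⟨κ, _, a, y, hxy, ha⟩ := hM ι ‹_› (c 0) x (hx 0)
    obtain ⟨ν, _, b, z, hyz, hb⟩ := ih (fun s j => ∑ i, c s.succ i * a i j) y fun s => by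
      rw [← sum_smul_sum_smul, ← hx s.succ]
      simp only [← hxy]
    have hab : ∀ (d : ι → R) l, ∑ i, d i * ∑ j, a i j * b j l = ∑ j, (∑ i, d i * a i j) * b j l :=
      fun d l => by simpa only [smul_eq_mul] using sum_smul_sum_smul d a (fun j => b j l)
    refine ⟨ν, ‹_›, fun i l => ∑ j, a i j * b j l, z, fun i => ?_, Fin.cases ?_ ?_⟩
    · rw [hxy i, ← sum_smul_sum_smul]
      simp only [← hyz]
    · intro l
      simp [hab, ha]
    · intro s l
      rw [hab, hb s l]

lemma ker_of_surjective (hM : IsFlatMod R M) (hN : IsFlatMod R N) (φ : M →ₗ[R] N)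
    (hφ : Function.Surjective φ) : IsFlatMod R (LinearMap.ker φ) := by
  intro ι _ r x hx
  obtain ⟨κ, _, a, y, hxy, ha⟩ := hM ι ‹_› r (fun i => x i) (by
    simpa using congrArg (LinearMap.ker φ).subtype hx)
  -- The `φ (y j)` satisfy the relations given by the rows of `a`: factor them all at once,
  -- then correct each `y j` by a lift of that factorization to land in the kernel.
  let e := Fintype.equivFin ι
  obtain ⟨ν, _, b, z, hyz, hb⟩ := hN.exists_factorization_of_relations (Fintype.card ι)
    (fun s j => a (e.symm s) j) (fun j => φ (y j)) fun s => by
      simp only [← map_smul, ← map_sum, ← hxy, LinearMap.mem_ker.1 (x (e.symm s)).2]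
  choose w hw using hφ
  let y' : κ → LinearMap.ker φ := fun j => ⟨y j - ∑ l, b j l • w (z l), by simp [hw, ← hyz]⟩
  have hab : ∀ i l, ∑ j, a i j * b j l = 0 := fun i l => by simpa using hb (e i) l
  refine ⟨κ, ‹_›, a, y', fun i => Subtype.ext ?_, ha⟩
  simp only [y', Submodule.coe_sum, Submodule.coe_smul, smul_sub, Finset.sum_sub_distrib,
    sum_smul_sum_smul, hab, zero_smul, Finset.sum_const_zero, sub_zero, ← hxy]

end IsFlatMod

section FlatDimension

variable {R}

lemma fdLE_of_linearEquiv {n : ℕ} {M N : ModuleCat.{0} R} (e : M ≃ₗ[R] N) (hM : fdLE R n M) :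
    fdLE R n N := by
  cases n with
  | zero => exact IsFlatMod.of_linearEquiv e hM
  | succ n =>
    obtain ⟨K, F, f, g, hF, hf, hg, hfg, hK⟩ := hM
    exact ⟨K, F, f, g ≫ ModuleCat.ofHom e.toLinearMap, hF, hf, e.surjective.comp hg,
      hfg.comp_injective _ e.injective e.map_zero, hK⟩

lemma fdLE_one_of_isFlatMod {M : ModuleCat.{0} R} (hM : IsFlatMod R M) : fdLE R 1 M :=
  ⟨ModuleCat.of R PUnit, M, 0, 𝟙 M, hM, fun _ _ _ => Subsingleton.elim _ _,
    Function.surjective_id,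
    fun x => ⟨fun hx => ⟨0, by simpa using hx.symm⟩, fun ⟨_, hx⟩ => hx ▸ rfl⟩,
    IsFlatMod.of_subsingleton⟩

lemma fdLE.succ : ∀ {n : ℕ} {M : ModuleCat.{0} R}, fdLE R n M → fdLE R (n + 1) M
  | 0, _, hM => fdLE_one_of_isFlatMod hM
  | _ + 1, _, ⟨K, F, f, g, hF, hf, hg, hfg, hK⟩ => ⟨K, F, f, g, hF, hf, hg, hfg, hK.succ⟩

lemma fdLE_prod {A : Type} [AddCommGroup A] [Module R A] (hA : IsFlatMod R A) :
    ∀ {n : ℕ} {M : ModuleCat.{0} R}, fdLE R n M → fdLE R n (ModuleCat.of R (A × M))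
  | 0, _, hM => hA.prod hM
  | _ + 1, _, ⟨K, F, f, g, hF, hf, hg, hfg, hK⟩ => by
    refine ⟨K, ModuleCat.of R (A × F), ModuleCat.ofHom (LinearMap.inr R A F ∘ₗ f.hom),
      ModuleCat.ofHom (LinearMap.prodMap LinearMap.id g.hom), hA.prod hF,
      fun _ _ h => hf (congrArg Prod.snd h), Function.surjective_id.prodMap hg, ?_, hK⟩
    rintro ⟨a, x⟩
    simp only [ModuleCat.hom_ofHom, LinearMap.prodMap_apply, LinearMap.id_coe, id_eq,
      Prod.mk_eq_zero, Set.mem_range, LinearMap.coe_comp, Function.comp_apply,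
      LinearMap.inr_apply, Prod.mk.injEq]
    constructor
    · rintro ⟨rfl, hx⟩
      obtain ⟨y, rfl⟩ := (hfg x).1 hx
      exact ⟨y, rfl, rfl⟩
    · rintro ⟨y, rfl, rfl⟩
      exact ⟨rfl, (hfg _).2 ⟨y, rfl⟩⟩

lemma fdLE_ker_of_surjective {F : Type} [AddCommGroup F] [Module R F] (hF : IsFlatMod R F) :
    ∀ {n : ℕ} {M : ModuleCat.{0} R} (φ : M →ₗ[R] F), Function.Surjective φ → fdLE R n M →
      fdLE R n (ModuleCat.of R (LinearMap.ker φ))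
  | 0, _, φ, hφ, hM => hM.ker_of_surjective hF φ hφ
  | _ + 1, _, φ, hφ, ⟨K, P, f, g, hP, hf, hg, hfg, hK⟩ => by
    let ψ := φ ∘ₗ g.hom
    refine ⟨K, ModuleCat.of R (LinearMap.ker ψ),
      ModuleCat.ofHom (f.hom.codRestrict _ fun k => by simp [ψ, hfg.apply_apply_eq_zero]),
      ModuleCat.ofHom (g.hom.restrict fun x hx => hx), hP.ker_of_surjective hF ψ (hφ.comp hg),
      fun _ _ h => hf (congrArg Subtype.val h), ?_, ?_, hK⟩
    · rintro ⟨x, hx⟩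
      obtain ⟨y, rfl⟩ := hg x
      exact ⟨⟨y, hx⟩, rfl⟩
    · rintro ⟨y, hy⟩
      refine (Subtype.ext_iff.trans (hfg y)).trans ⟨fun ⟨k, hk⟩ => ⟨k, Subtype.ext hk⟩, ?_⟩
      rintro ⟨k, hk⟩
      exact ⟨k, congrArg Subtype.val hk⟩

noncomputable def LinearMap.kerCoprodEquivKerComp {P K F M : Type*} [AddCommGroup P]
    [Module R P] [AddCommGroup K] [Module R K] [AddCommGroup F] [Module R F] [AddCommGroup M]
    [Module R M] (s : P →ₗ[R] F) {f : K →ₗ[R] F} {q : F →ₗ[R] M} (hf : Function.Injective f)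
    (hfq : Function.Exact f q) : LinearMap.ker (s.coprod f) ≃ₗ[R] LinearMap.ker (q ∘ₗ s) := by
  refine LinearEquiv.ofBijective
    (LinearMap.codRestrict _ (LinearMap.fst R P K ∘ₗ Submodule.subtype _) fun ⟨⟨p, k⟩, h⟩ => by
      have h : s p = -f k := eq_neg_of_add_eq_zero_left h
      simp [h, hfq.apply_apply_eq_zero]) ⟨?_, ?_⟩
  · rintro ⟨⟨p, k⟩, h⟩ ⟨⟨p', k'⟩, h'⟩ hpp
    obtain rfl : p = p' := congrArg Subtype.val hpp
    have : f k = f k' :=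
      add_left_cancel ((LinearMap.mem_ker.1 h).trans (LinearMap.mem_ker.1 h').symm)
    simp [hf this]
  · rintro ⟨p, hp⟩
    obtain ⟨k, hk⟩ := (hfq (s p)).1 hp
    exact ⟨⟨(p, -k), by simp [hk]⟩, rfl⟩

lemma fdLE_ker_of_surjective_finsupp {σ : Type} {n : ℕ} {M : ModuleCat.{0} R}
    (π : (σ →₀ R) →ₗ[R] M) (hπ : Function.Surjective π) (hM : fdLE R n M) :
    fdLE R n (ModuleCat.of R (LinearMap.ker π)) := by
  cases n with
  | zero => exact (IsFlatMod.finsupp σ).ker_of_surjective hM π hπ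
  | succ n =>
    -- Schanuel: for a lift `s` of `π` through `q`, `ker π` is the kernel of
    -- `(s, f) : (σ →₀ R) × K → F`, a surjection onto a flat module.
    obtain ⟨K, F, f, q, hF, hf, hq, hfq, hK⟩ := hM
    obtain ⟨s, rfl⟩ := Module.projective_lifting_property q.hom π hq
    have hsf : Function.Surjective (s.coprod f.hom) := fun y => by
      obtain ⟨p, hp⟩ := hπ (q y)
      obtain ⟨k, hk⟩ := (hfq (y - s p)).1 (by simpa [sub_eq_zero] using hp.symm)
      exact ⟨(p, k), by simp [hk]⟩
    exact (fdLE_of_linearEquiv (LinearMap.kerCoprodEquivKerComp s hf hfq)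
      (fdLE_ker_of_surjective hF _ hsf (fdLE_prod (IsFlatMod.finsupp σ) hK))).succ

end FlatDimension

section LnInjective

variable {R}

lemma extVanish_iff_isZero {n : ℕ} {M N : ModuleCat.{0} R} :
    extVanish R n M N ↔ IsZero (((Ext ℤ (ModuleCat.{0} R) n).obj (Opposite.op M)).obj N) :=
  ModuleCat.isZero_iff_subsingleton.symm

lemma LnInj.extVanish_succ {n : ℕ} {W : ModuleCat.{0} R} (hW : LnInj R n W) (k : ℕ) :
    ∀ M : ModuleCat.{0} R, fdLE R n M → extVanish R (k + 1) M W := by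
  induction k with
  | zero => exact hW
  | succ k ih =>
    intro M hM
    have hπ := Finsupp.linearCombination_id_surjective R M
    have hS := LinearMap.shortExact_shortComplexKer hπ
    exact extVanish_iff_isZero.2 ((extVanish_iff_isZero.1
      (ih _ (fdLE_ker_of_surjective_finsupp _ hπ hM))).of_iso (hS.extSuccSuccIso W k))

lemma lnInj_of_injective (n : ℕ) (E : ModuleCat.{0} R) [Injective E] : LnInj R n E :=
  fun M _ => extVanish_iff_isZero.2 (isZero_Ext_succ_of_injective M E 0)

end LnInjective

/-- The `L_n`-injective dimension of `N` is at most `m` iff `Ext^{m+1}_R(M, N) = 0`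
for every module `M` of flat dimension at most `n`. -/
theorem stmt17 (n m : ℕ) (N : ModuleCat.{0} R) :
    LnidLE R n m N ↔ ∀ M : ModuleCat.{0} R, fdLE R n M → extVanish R (m + 1) M N := by
  induction m generalizing N with
  | zero => rfl
  | succ m ih =>
    simp only [extVanish_iff_isZero] at ih ⊢
    constructor
    · rintro ⟨W, C, f, g, hW, hf, hg, hfg, hC⟩ M hM
      have hS := ModuleCat.shortComplex_shortExact
        (ShortComplex.mk f g (by ext x; exact hfg.apply_apply_eq_zero x)) hfg hf hg
      exact hS.isZero_Ext_X₁ M (m + 1) ((ih C).1 hC M hM)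
        (extVanish_iff_isZero.1 (hW.extVanish_succ (m + 1) M hM))
    · intro h
      let S := ShortComplex.mk (Injective.ι N) (cokernel.π (Injective.ι N)) (cokernel.condition _)
      have hS : S.ShortExact :=
        { exact := ShortComplex.exact_of_g_is_cokernel _ (cokernelIsCokernel _) }
      refine ⟨_, _, _, _, lnInj_of_injective n (Injective.under N), hS.moduleCat_injective_f,
        hS.moduleCat_surjective_g,
        (ShortComplex.ShortExact.moduleCat_exact_iff_function_exact S).1 hS.exact,
        (ih _).2 fun M hM => ?_⟩
      exact hS.isZero_Ext_X₃ M (m + 1) (isZero_Ext_succ_of_injective M (Injective.under N) m)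
        (h M hM)
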